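/- Let q and r be distinct primes with {q, r} ≠ {2, 3}, let D = V ⋊ Z/r be as above, and let T = ⟨x, y | x^3 = y^2⟩ be the trefoil knot group. Then every homomorphism φ: T → D has abelian image (equivalently, factors through the abelianization T → Z). -/

import Mathlib

/-!
If `φ(x)³ = φ(y)²` is nontrivial, it is central in the image, and in `D` the centralizer of a
nontrivial element is abelian: writing `ζ_a` for the scalar by which `a` acts and `v_a` for its
translation part, `a` and `b` commute iff `(ζ_a - 1, v_a)` and `(ζ_b - 1, v_b)` are proportional.
If instead `φ(x)³ = φ(y)² = 1`, then since `{q, r} ≠ {2, 3}` one of `2, 3` is prime to both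
`q` and `r`, and an element of `D` killed by such an exponent is trivial; so `φ(x) = 1` or
`φ(y) = 1`. In both cases the generators have commuting images.
-/

open Multiplicative

/-- Left multiplication by a unit, as a multiplicative automorphism of the additive
group of the field, written multiplicatively. -/
def unitMulAut (F : Type*) [Field F] : Fˣ →* MulAut (Multiplicative F) where
  toFun u := AddEquiv.toMultiplicative (AddAut.mulLeft u)
  map_one' := by ext x; first | rfl | (simp; rfl)
  map_mul' u v := by ext x; first | rfl | (simp [mul_assoc]; rfl)

/-- The group `D = V ⋊ ℤ/r`, where `V` is the additive group of the field `F` and the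
generator of `ℤ/r` acts by multiplication by `ζ = χ (ofAdd 1)`; multiplication is
`(v,i)·(w,j) = (v + ζ^i w, i+j)`. -/
abbrev DD {r : ℕ} (F : Type*) [Field F] (χ : Multiplicative (ZMod r) →* Fˣ) :=
  Multiplicative F ⋊[(unitMulAut F).comp χ] Multiplicative (ZMod r)
/-- The trefoil knot group ⟨x, y | x³ = y²⟩. -/
abbrev TrefoilGroup : Type :=
  PresentedGroup ({FreeGroup.of 0 ^ 3 * (FreeGroup.of 1 ^ 2)⁻¹} : Set (FreeGroup (Fin 2)))

lemma injective_of_orderOf_map_ofAdd_one {G : Type*} [Group G] {r : ℕ}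
    {χ : Multiplicative (ZMod r) →* G} (hχ : orderOf (χ (ofAdd 1)) = r) :
    Function.Injective χ := by
  rw [injective_iff_map_eq_one]
  intro g hg
  obtain ⟨k, rfl⟩ : ∃ k : ℤ, g = ofAdd (k : ZMod r) := ⟨(toAdd g).cast, by simp⟩
  have hk : χ (ofAdd 1) ^ k = 1 := by rwa [← map_zpow, ← ofAdd_zsmul, zsmul_one]
  rw [← orderOf_dvd_iff_zpow_eq_one, hχ] at hk
  simp [(ZMod.intCast_zmod_eq_zero_iff_dvd k r).mpr hk]

namespace DD

variable {r : ℕ} {F : Type*} [Field F] {χ : Multiplicative (ZMod r) →* Fˣ}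

lemma toAdd_mul_left (a b : DD F χ) :
    toAdd (a * b).left = toAdd a.left + (χ a.right : F) * toAdd b.left := rfl

lemma commute_iff (a b : DD F χ) :
    Commute a b ↔
      ((χ a.right : F) - 1) * toAdd b.left = ((χ b.right : F) - 1) * toAdd a.left := by
  rw [Commute, SemiconjBy, SemidirectProduct.ext_iff, ← toAdd.injective.eq_iff,
    toAdd_mul_left, toAdd_mul_left]
  simp only [SemidirectProduct.mul_right, mul_comm a.right b.right, and_true]
  constructor <;> intro h <;> linear_combination h

lemma commute_of_commute_of_ne_one (hχ : Function.Injective χ) {z a b : DD F χ} (hz : z ≠ 1)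
    (ha : Commute a z) (hb : Commute b z) : Commute a b := by
  rw [commute_iff] at ha hb ⊢
  by_cases h0 : (χ z.right : F) - 1 = 0
  · have hz1 : z.right = 1 := hχ (Units.ext (by simpa [sub_eq_zero] using h0))
    have hvz : toAdd z.left ≠ 0 := fun h ↦ hz (SemidirectProduct.ext (toAdd.injective h) hz1)
    rw [h0, zero_mul, mul_eq_zero, or_iff_left hvz, sub_eq_zero] at ha hb
    simp [ha, hb]
  · apply mul_left_cancel₀ h0
    linear_combination ((χ b.right : F) - 1) * ha - ((χ a.right : F) - 1) * hb

lemma eq_one_of_pow_eq_one {n : ℕ} (hnr : n.Coprime r) (hnF : (n : F) ≠ 0) {a : DD F χ}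
    (h : a ^ n = 1) : a = 1 := by
  have hright : a.right = 1 := by
    have h1 : a.right ^ n = 1 := by
      rw [← SemidirectProduct.rightHom_eq_right, ← map_pow, h, map_one]
    have h2 : (n : ZMod r) * toAdd a.right = 0 := by
      rw [← nsmul_eq_mul, ← toAdd_pow, h1, toAdd_one]
    rw [((ZMod.isUnit_iff_coprime n r).mpr hnr).mul_right_eq_zero] at h2
    exact toAdd.injective h2
  have ha : a = SemidirectProduct.inl a.left := SemidirectProduct.ext rfl hright
  rw [ha, ← map_pow, map_eq_one_iff _ SemidirectProduct.inl_injective] at h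
  have h1 : (n : F) * toAdd a.left = 0 := by
    rw [← nsmul_eq_mul, ← toAdd_pow, h, toAdd_one]
  rw [ha, map_eq_one_iff _ SemidirectProduct.inl_injective]
  exact toAdd.injective ((mul_eq_zero.mp h1).resolve_left hnF)

end DD

lemma PresentedGroup.commute_map_of_commute_of {α G : Type*} [Group G]
    {rels : Set (FreeGroup α)} (φ : PresentedGroup rels →* G)
    (h : ∀ i j, Commute (φ (of i)) (φ (of j))) (s t : PresentedGroup rels) :
    Commute (φ s) (φ t) := by
  set S := Set.range (φ ∘ of)
  have hrange : φ.range = Subgroup.closure S := by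
    rw [MonoidHom.range_eq_map, ← closure_range_of, MonoidHom.map_closure, ← Set.range_comp]
  have hcomm : Subgroup.closure S ≤ Subgroup.centralizer (Subgroup.closure S) := by
    rw [Subgroup.centralizer_closure, Subgroup.closure_le]
    rintro _ ⟨i, rfl⟩ _ ⟨j, rfl⟩
    exact (h j i).eq
  have hmem (u : PresentedGroup rels) : φ u ∈ Subgroup.closure S := hrange ▸ ⟨u, rfl⟩
  exact hcomm (hmem t) (φ s) (hmem s)

lemma TrefoilGroup.of_zero_pow_three :
    (PresentedGroup.of 0 : TrefoilGroup) ^ 3 = PresentedGroup.of 1 ^ 2 :=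
  PresentedGroup.mk_eq_mk_of_mul_inv_mem rfl

lemma ne_two_or_ne_three {q r : ℕ} (h : ({q, r} : Set ℕ) ≠ {2, 3}) :
    (q ≠ 2 ∧ r ≠ 2) ∨ (q ≠ 3 ∧ r ≠ 3) := by
  by_contra! hc
  obtain ⟨h2, h3⟩ := hc
  obtain ⟨rfl, rfl⟩ | ⟨rfl, rfl⟩ : q = 2 ∧ r = 3 ∨ q = 3 ∧ r = 2 := by omega
  · exact h rfl
  · exact h (Set.pair_comm 3 2)

theorem trefoil_to_DD_abelian_image_general {q r : ℕ} (hq : q.Prime) (hr : r.Prime)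
    (hqr23 : ({q, r} : Set ℕ) ≠ {2, 3})
    {F : Type*} [Field F] [Fintype F] (hF : Fintype.card F = q ^ (r - 1))
    (χ : Multiplicative (ZMod r) →* Fˣ) (hχ : orderOf (χ (ofAdd 1)) = r)
    (φ : TrefoilGroup →* DD F χ) :
    ∀ s t : TrefoilGroup, Commute (φ s) (φ t) := by
  have : Fact q.Prime := ⟨hq⟩
  have : CharP F q := charP_of_card_eq_prime_pow hF
  have eq_one_of_pow_prime {p : ℕ} (hp : p.Prime) (hpq : p ≠ q) (hpr : p ≠ r) {d : DD F χ}
      (hd : d ^ p = 1) : d = 1 :=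
    DD.eq_one_of_pow_eq_one ((Nat.coprime_primes hp hr).mpr hpr)
      (by rwa [Ne, CharP.cast_eq_zero_iff F q, Nat.prime_dvd_prime_iff_eq hq hp, eq_comm]) hd
  set a := φ (PresentedGroup.of 0)
  set b := φ (PresentedGroup.of 1)
  have hrel : a ^ 3 = b ^ 2 := by rw [← map_pow, ← map_pow, TrefoilGroup.of_zero_pow_three]
  have hab : Commute a b := by
    by_cases hz : a ^ 3 = 1
    · rcases ne_two_or_ne_three hqr23 with ⟨hq2, hr2⟩ | ⟨hq3, hr3⟩
      · rw [eq_one_of_pow_prime Nat.prime_two hq2.symm hr2.symm (hrel ▸ hz : b ^ 2 = 1)]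
        exact Commute.one_right a
      · rw [eq_one_of_pow_prime Nat.prime_three hq3.symm hr3.symm hz]
        exact Commute.one_left b
    · exact DD.commute_of_commute_of_ne_one (injective_of_orderOf_map_ofAdd_one hχ) hz
        (Commute.self_pow a 3) (hrel ▸ Commute.self_pow b 2)
  apply PresentedGroup.commute_map_of_commute_of
  intro i j
  fin_cases i <;> fin_cases j
  exacts [Commute.refl a, hab, hab.symm, Commute.refl b]

theorem trefoil_to_DD_abelian_image {q r : ℕ} (hq : q.Prime) (hr : r.Prime)
    (hqr : q ≠ r) (hqr23 : ({q, r} : Set ℕ) ≠ {2, 3})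
    {F : Type*} [Field F] [Fintype F] (hF : Fintype.card F = q ^ (r - 1))
    (χ : Multiplicative (ZMod r) →* Fˣ) (hχ : orderOf (χ (ofAdd 1)) = r)
    (φ : TrefoilGroup →* DD F χ) :
    ∀ s t : TrefoilGroup, Commute (φ s) (φ t) :=
  trefoil_to_DD_abelian_image_general hq hr hqr23 hF χ hχ φ
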